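/- The cross-entropy loss does not satisfy the Well-Suited Loss Property: there exist vectors y1, y2 ∈ ℝ² such that L_CE(y1, y2) < L_CE(0, y2) yet ⟨y1, y2⟩ ≤ 0. -/

import Mathlib

noncomputable def softmax2 (v : Fin 2 → ℝ) : Fin 2 → ℝ :=
  fun i => Real.exp (v i) / ∑ j, Real.exp (v j)

noncomputable def LCE (y1 y2 : Fin 2 → ℝ) : ℝ :=
  -(∑ i, Real.log (softmax2 y1 i) * softmax2 y2 i)

/-!
Softmax is invariant under adding a constant to all logits, so for `y₁ = y₂ + (1, 1)` the loss
`L(y₁, y₂)` is the binary entropy of `softmax y₂`, whereas `L(0, y₂)` is the cross-entropy against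
the uniform distribution, namely `log 2`. Binary entropy is strictly below `log 2` away from the
uniform distribution, so any `y₂` with distinct entries and `⟨y₂ + (1, 1), y₂⟩ ≤ 0` works,
e.g. `y₂ = (0, -1)`.
-/

open Real

lemma sum_softmax2 (v : Fin 2 → ℝ) : ∑ i, softmax2 v i = 1 := by
  simp only [softmax2, ← Finset.sum_div]
  exact div_self (Finset.sum_pos (fun _ _ ↦ exp_pos _) Finset.univ_nonempty).ne'

lemma softmax2_add_const (v : Fin 2 → ℝ) (c : ℝ) :
    softmax2 (fun i ↦ v i + c) = softmax2 v := by
  funext i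
  simp only [softmax2, exp_add, ← Finset.sum_mul]
  exact mul_div_mul_right _ _ (exp_ne_zero c)

lemma softmax2_zero : softmax2 0 = fun _ ↦ 2⁻¹ := by
  funext i
  norm_num [softmax2]

lemma softmax2_one_eq (v : Fin 2 → ℝ) : softmax2 v 1 = 1 - softmax2 v 0 := by
  have h := sum_softmax2 v
  rw [Fin.sum_univ_two] at h
  linarith

lemma softmax2_zero_eq_inv_two_iff (v : Fin 2 → ℝ) : softmax2 v 0 = 2⁻¹ ↔ v 0 = v 1 := by
  rw [softmax2, Fin.sum_univ_two, div_eq_iff (by positivity), ← exp_eq_exp (x := v 0)]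
  constructor <;> intro h <;> linarith

lemma LCE_add_const_left (y y' : Fin 2 → ℝ) (c : ℝ) :
    LCE (fun i ↦ y i + c) y' = LCE y y' := by
  simp only [LCE, softmax2_add_const]

lemma LCE_zero_left (y : Fin 2 → ℝ) : LCE 0 y = log 2 := by
  simp only [LCE, softmax2_zero, log_inv, ← Finset.mul_sum, sum_softmax2]
  ring

lemma LCE_self (y : Fin 2 → ℝ) : LCE y y = binEntropy (softmax2 y 0) := by
  simp only [LCE, Fin.sum_univ_two, softmax2_one_eq, binEntropy, log_inv]
  ring

lemma LCE_self_lt_LCE_zero_left {y : Fin 2 → ℝ} (h : y 0 ≠ y 1) : LCE y y < LCE 0 y := by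
  rw [LCE_self, LCE_zero_left, binEntropy_lt_log_two, Ne, softmax2_zero_eq_inv_two_iff]
  exact h

/-- The cross-entropy loss does not satisfy the Well-Suited Loss Property. -/
theorem crossEntropy_not_WSLP :
    ∃ y1 y2 : Fin 2 → ℝ, LCE y1 y2 < LCE 0 y2 ∧ (∑ i, y1 i * y2 i) ≤ 0 := by
  refine ⟨fun i ↦ ![0, -1] i + 1, ![0, -1], ?_, ?_⟩
  · rw [LCE_add_const_left]
    exact LCE_self_lt_LCE_zero_left (by norm_num)
  · norm_num [Fin.sum_univ_two]
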